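/- arXiv:2209.12676 — 10 statements merged into one kernel-verified Lean document; each statement's English description precedes it below -/
import Mathlib

section
/- Let (X, τ) be a topological space and 𝒫 a primal on X. If A ⊆ X and the complement Aᶜ is open (i.e., A is closed), then A^⋄ ⊆ A. -/
/-- A collection `P` of subsets of `X` is a *primal* on `X` if `X ∉ P`,
`P` is downward closed, and `A ∩ B ∈ P` implies `A ∈ P` or `B ∈ P`. -/
def PrimalOn (X : Type*) (P : Set (Set X)) : Prop :=
  (Set.univ : Set X) ∉ P ∧
  (∀ A B : Set X, A ∈ P → B ⊆ A → B ∈ P) ∧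
  (∀ A B : Set X, A ∩ B ∈ P → A ∈ P ∨ B ∈ P)
/-- The primal operator `A^⋄ = {x : ∀ open U ∋ x, Aᶜ ∪ Uᶜ ∈ P}`. -/
def pdiam {X : Type*} [TopologicalSpace X] (P : Set (Set X)) (A : Set X) : Set X :=
  {x : X | ∀ U : Set X, IsOpen U → x ∈ U → Aᶜ ∪ Uᶜ ∈ P}

theorem pdiam_subset_of_closed {X : Type*} [TopologicalSpace X] (P : Set (Set X))
    (hP : PrimalOn X P) (A : Set X) (hA : IsOpen Aᶜ) : pdiam P A ⊆ A := by
  intro x hx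
  by_contra hxA
  have h := hx Aᶜ hA hxA
  simp only [compl_compl] at h
  rw [Set.compl_union_self] at h
  exact hP.1 h
end

section
/- Let (X, τ) be a topological space and 𝒫 a primal on X. Then for every A ⊆ X, the set A^⋄ is closed in X, i.e., cl(A^⋄) = A^⋄. -/
theorem closure_pdiam {X : Type*} [TopologicalSpace X] (P : Set (Set X))
    (hP : PrimalOn X P) (A : Set X) : closure (pdiam P A) = pdiam P A := by
  refine IsClosed.closure_eq ?_
  rw [← isOpen_compl_iff, isOpen_iff_forall_mem_open]
  intro x hx
  simp only [Set.mem_compl_iff, pdiam, Set.mem_setOf_eq, not_forall] at hx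
  obtain ⟨U, hU, hxU, hnP⟩ := hx
  refine ⟨U, fun y hy hyd => hnP (hyd U hU hy), hU, hxU⟩
end

section
/- Let (X, τ) be a topological space and 𝒫 a primal on X. Then for every A ⊆ X, (A^⋄)^⋄ ⊆ A^⋄. -/
theorem pdiam_pdiam_subset {X : Type*} [TopologicalSpace X] (P : Set (Set X))
    (hP : PrimalOn X P) (A : Set X) : pdiam P (pdiam P A) ⊆ pdiam P A := by
  intro x hx U hU hxU
  by_contra hAU
  -- Every point of U is not in pdiam P A
  have hsub : U ⊆ (pdiam P A)ᶜ := by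
    intro y hyU hy
    exact hAU (hy U hU hyU)
  have h := hx U hU hxU
  have : (Set.univ : Set X) ∈ P := by
    have huniv : (pdiam P A)ᶜ ∪ Uᶜ = Set.univ := by
      apply Set.eq_univ_of_forall
      intro z
      by_cases hz : z ∈ U
      · exact Or.inl (hsub hz)
      · exact Or.inr hz
    rwa [huniv] at h
  exact hP.1 this
end

section
/- Let (X, τ) be a topological space and 𝒫 a primal on X. Then for all A, B ⊆ X, (A ∪ B)^⋄ = A^⋄ ∪ B^⋄. -/
theorem pdiam_union {X : Type*} [TopologicalSpace X] (P : Set (Set X))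
    (hP : PrimalOn X P) (A B : Set X) :
    pdiam P (A ∪ B) = pdiam P A ∪ pdiam P B := by
  obtain ⟨-, hdown, hsplit⟩ := hP
  ext x
  constructor
  · intro hx
    by_contra hc
    rw [Set.mem_union] at hc
    push_neg at hc
    obtain ⟨hA, hB⟩ := hc
    simp only [pdiam, Set.mem_setOf_eq, not_forall] at hA hB
    obtain ⟨U, hU, hxU, hAU⟩ := hA
    obtain ⟨V, hV, hxV, hBV⟩ := hB
    have h := hx (U ∩ V) (hU.inter hV) ⟨hxU, hxV⟩
    have heq : (A ∪ B)ᶜ ∪ (U ∩ V)ᶜ =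
        (Aᶜ ∪ Uᶜ ∪ Vᶜ) ∩ (Bᶜ ∪ Uᶜ ∪ Vᶜ) := by
      ext y; simp [Set.mem_union, Set.mem_inter_iff]; tauto
    rw [heq] at h
    rcases hsplit _ _ h with h' | h'
    · exact hAU (hdown _ _ h' (by intro y; simp; tauto))
    · exact hBV (hdown _ _ h' (by intro y; simp; tauto))
  · intro hx U hU hxU
    rcases hx with hx | hx
    · exact hdown _ _ (hx U hU hxU) (by intro y; simp; tauto)
    · exact hdown _ _ (hx U hU hxU) (by intro y; simp; tauto)
end

section
/- Let (X, τ) be a topological space and 𝒫 a primal on X, and let A, B ⊆ X. If A is open in X, then A ∩ B^⋄ ⊆ (A ∩ B)^⋄. -/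
theorem open_inter_pdiam_subset {X : Type*} [TopologicalSpace X] (P : Set (Set X))
    (hP : PrimalOn X P) (A B : Set X) (hA : IsOpen A) :
    A ∩ pdiam P B ⊆ pdiam P (A ∩ B) := by
  rintro x ⟨hxA, hxB⟩ U hU hxU
  have h := hxB (A ∩ U) (hA.inter hU) ⟨hxA, hxU⟩
  have heq : (A ∩ B)ᶜ ∪ Uᶜ = Bᶜ ∪ (A ∩ U)ᶜ := by
    simp [Set.compl_inter, Set.union_comm, Set.union_assoc, Set.union_left_comm]
  rw [heq]; exact h
end

section
/- Let (X, τ) be a topological space and 𝒫 a primal on X. Then for all A, B ⊆ X, cl^⋄(A ∪ B) = cl^⋄(A) ∪ cl^⋄(B). -/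
/-- The closure operator `cl^⋄(A) = A ∪ A^⋄`. -/
def clDiam {X : Type*} [TopologicalSpace X] (P : Set (Set X)) (A : Set X) : Set X :=
  A ∪ pdiam P A

theorem clDiam_union {X : Type*} [TopologicalSpace X] (P : Set (Set X))
    (hP : PrimalOn X P) (A B : Set X) :
    clDiam P (A ∪ B) = clDiam P A ∪ clDiam P B := by
  obtain ⟨-, hdown, hsplit⟩ := hP
  have mono : ∀ C D : Set X, C ⊆ D → pdiam P C ⊆ pdiam P D := by
    intro C D hCD x hx U hU hxU
    exact hdown _ _ (hx U hU hxU) (Set.union_subset_union_left _ (Set.compl_subset_compl.2 hCD))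
  have key : pdiam P (A ∪ B) ⊆ pdiam P A ∪ pdiam P B := by
    intro x hx
    by_contra h
    have hA : x ∉ pdiam P A := fun hh => h (Or.inl hh)
    have hB : x ∉ pdiam P B := fun hh => h (Or.inr hh)
    simp only [pdiam, Set.mem_setOf_eq, not_forall] at hA hB
    obtain ⟨U, hU, hxU, hAU⟩ := hA
    obtain ⟨V, hV, hxV, hBV⟩ := hB
    have hmem := hx (U ∩ V) (hU.inter hV) ⟨hxU, hxV⟩
    have heq : (A ∪ B)ᶜ ∪ (U ∩ V)ᶜ = (Aᶜ ∪ Uᶜ ∪ Vᶜ) ∩ (Bᶜ ∪ Uᶜ ∪ Vᶜ) := by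
      rw [Set.compl_union, Set.compl_inter]
      ext y; simp; tauto
    rw [heq] at hmem
    rcases hsplit _ _ hmem with h1 | h1
    · exact hAU (hdown _ _ h1 (by intro y hy; rcases hy with h | h <;> simp [h]))
    · exact hBV (hdown _ _ h1 (by intro y hy; rcases hy with h | h <;> simp [h]))
  apply Set.Subset.antisymm
  · unfold clDiam
    intro x hx
    rcases hx with hx | hx
    · rcases hx with h | h
      · exact Or.inl (Or.inl h)
      · exact Or.inr (Or.inl h)
    · rcases key hx with h | h
      · exact Or.inl (Or.inr h)
      · exact Or.inr (Or.inr h)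
  · unfold clDiam
    intro x hx
    rcases hx with (h | h) | (h | h)
    · exact Or.inl (Or.inl h)
    · exact Or.inr (mono _ _ Set.subset_union_left h)
    · exact Or.inl (Or.inr h)
    · exact Or.inr (mono _ _ Set.subset_union_right h)
end

section
/- Let (X, τ) be a topological space and 𝒫 a primal on X. Then the map cl^⋄ : 2^X → 2^X given by cl^⋄(A) = A ∪ A^⋄ is a Kuratowski closure operator: (i) cl^⋄(∅) = ∅; (ii) A ⊆ cl^⋄(A) for every A ⊆ X; (iii) cl^⋄(A ∪ B) = cl^⋄(A) ∪ cl^⋄(B) for all A, B ⊆ X; (iv) cl^⋄(cl^⋄(A)) = cl^⋄(A) for every A ⊆ X. -/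
theorem clDiam_kuratowski {X : Type*} [TopologicalSpace X] (P : Set (Set X))
    (hP : PrimalOn X P) :
    clDiam P (∅ : Set X) = ∅ ∧
    (∀ A : Set X, A ⊆ clDiam P A) ∧
    (∀ A B : Set X, clDiam P (A ∪ B) = clDiam P A ∪ clDiam P B) ∧
    (∀ A : Set X, clDiam P (clDiam P A) = clDiam P A) := by
  obtain ⟨hX, hdown, hsplit⟩ := hP
  -- pdiam is monotone
  have pd_mono : ∀ A B : Set X, A ⊆ B → pdiam P A ⊆ pdiam P B := by
    intro A B hAB x hx U hU hxU
    exact hdown _ _ (hx U hU hxU)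
      (Set.union_subset_union_left _ (Set.compl_subset_compl.mpr hAB))
  -- pdiam of empty set is empty
  have pd_empty : pdiam P (∅ : Set X) = ∅ := by
    ext x
    simp only [pdiam, Set.mem_setOf_eq, Set.mem_empty_iff_false, iff_false]
    intro hx
    have := hx Set.univ isOpen_univ (Set.mem_univ x)
    simp only [Set.compl_empty, Set.compl_univ, Set.union_empty] at this
    exact hX this
  -- pdiam is additive
  have pd_union : ∀ A B : Set X, pdiam P (A ∪ B) = pdiam P A ∪ pdiam P B := by
    intro A B
    apply Set.Subset.antisymm
    · intro x hx
      by_contra hc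
      rw [Set.mem_union] at hc
      push_neg at hc
      obtain ⟨hA, hB⟩ := hc
      simp only [pdiam, Set.mem_setOf_eq] at hA hB
      push_neg at hA hB
      obtain ⟨U, hU, hxU, hAU⟩ := hA
      obtain ⟨V, hV, hxV, hBV⟩ := hB
      have h := hx (U ∩ V) (hU.inter hV) ⟨hxU, hxV⟩
      rw [Set.compl_union, Set.compl_inter] at h
      have heq : Aᶜ ∩ Bᶜ ∪ (Uᶜ ∪ Vᶜ) = (Aᶜ ∪ (Uᶜ ∪ Vᶜ)) ∩ (Bᶜ ∪ (Uᶜ ∪ Vᶜ)) := by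
        ext y; simp only [Set.mem_union, Set.mem_inter_iff]; tauto
      rw [heq] at h
      rcases hsplit _ _ h with h' | h'
      · exact hAU (hdown _ _ h' (by intro y hy; rcases hy with hy | hy <;> simp [hy]))
      · exact hBV (hdown _ _ h' (by intro y hy; rcases hy with hy | hy <;> simp [hy]))
    · intro x hx
      rcases hx with hx | hx
      · exact pd_mono A (A ∪ B) Set.subset_union_left hx
      · exact pd_mono B (A ∪ B) Set.subset_union_right hx
  -- pdiam is "idempotent": pdiam (pdiam A) ⊆ pdiam A
  have pd_pd : ∀ A : Set X, pdiam P (pdiam P A) ⊆ pdiam P A := by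
    intro A x hx
    by_contra hxA
    simp only [pdiam, Set.mem_setOf_eq] at hxA
    push_neg at hxA
    obtain ⟨U, hU, hxU, hAU⟩ := hxA
    -- U ⊆ (pdiam P A)ᶜ
    have hUsub : U ⊆ (pdiam P A)ᶜ := by
      intro y hy hymem
      exact hAU (hymem U hU hy)
    have h := hx U hU hxU
    have huniv : (Set.univ : Set X) ∈ P := by
      refine hdown _ _ h ?_
      intro y _
      by_cases hy : y ∈ pdiam P A
      · exact Or.inr (fun hyU => hUsub hyU hy)
      · exact Or.inl hy
    exact hX huniv
  refine ⟨?_, ?_, ?_, ?_⟩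
  · simp [clDiam, pd_empty]
  · intro A
    exact Set.subset_union_left
  · intro A B
    simp only [clDiam, pd_union]
    ext y; simp only [Set.mem_union]; tauto
  · intro A
    apply Set.Subset.antisymm
    · simp only [clDiam, pd_union]
      intro y hy
      rcases hy with (hy | hy) | (hy | hy)
      · exact Or.inl hy
      · exact Or.inr hy
      · exact Or.inr hy
      · exact Or.inr (pd_pd A hy)
    · exact Set.subset_union_left
end

section
/- Let (X, τ) be a topological space and 𝒫 a primal on X. Then the primal topology τ^⋄ = {A ⊆ X : cl^⋄(Aᶜ) = Aᶜ} is finer than τ, i.e., every open set A ∈ τ satisfies cl^⋄(Aᶜ) = Aᶜ. -/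
theorem primal_topology_finer {X : Type*} [TopologicalSpace X] (P : Set (Set X))
    (hP : PrimalOn X P) (A : Set X) (hA : IsOpen A) : clDiam P Aᶜ = Aᶜ := by
  apply Set.union_eq_self_of_subset_right
  intro x hx
  by_contra hxA
  simp only [Set.mem_compl_iff, not_not] at hxA
  have := hx A hA hxA
  rw [compl_compl, Set.union_compl_self] at this
  exact hP.1 this
end

section
/- Let (X, τ) be a topological space, 𝒫 a primal on X, and A ⊆ X. Then: (i) A ∈ τ^⋄ (i.e., cl^⋄(Aᶜ) = Aᶜ) if and only if for every x ∈ A there exists an open set U containing x such that Uᶜ ∪ A ∉ 𝒫; (ii) if A ∉ 𝒫, then A ∈ τ^⋄. -/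
theorem mem_primal_topology_iff {X : Type*} [TopologicalSpace X] (P : Set (Set X))
    (hP : PrimalOn X P) (A : Set X) :
    (clDiam P Aᶜ = Aᶜ ↔ ∀ x ∈ A, ∃ U : Set X, IsOpen U ∧ x ∈ U ∧ Uᶜ ∪ A ∉ P) ∧
    (A ∉ P → clDiam P Aᶜ = Aᶜ) := by
  have key : clDiam P Aᶜ = Aᶜ ↔ ∀ x ∈ A, ∃ U : Set X, IsOpen U ∧ x ∈ U ∧ Uᶜ ∪ A ∉ P := by
    constructor
    · intro h x hx
      by_contra hc
      push_neg at hc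
      have hxd : x ∈ pdiam P Aᶜ := by
        intro U hU hxU
        have := hc U hU hxU
        simpa [Set.union_comm] using this
      have : x ∈ clDiam P Aᶜ := Or.inr hxd
      rw [h] at this
      exact this hx
    · intro h
      apply Set.Subset.antisymm
      · intro x hx
        rcases hx with hx | hx
        · exact hx
        · by_contra hxA
          simp only [Set.mem_compl_iff, not_not] at hxA
          obtain ⟨U, hU, hxU, hUP⟩ := h x hxA
          have := hx U hU hxU
          simp only [compl_compl] at this
          exact hUP (by simpa [Set.union_comm] using this)
      · exact Set.subset_union_left
  refine ⟨key, fun hA => key.mpr fun x hx => ⟨Set.univ, isOpen_univ, trivial, ?_⟩⟩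
  simpa using hA
end

section
/- Let (X, τ) be a topological space and 𝒫 a primal on X. Then the family ℬ = {T ∩ P : T ∈ τ and P ∉ 𝒫} is a base for the primal topology τ^⋄; that is, (a) every set of the form T ∩ P with T open and P ∉ 𝒫 belongs to τ^⋄ (i.e., cl^⋄((T ∩ P)ᶜ) = (T ∩ P)ᶜ), and (b) for every A ∈ τ^⋄ and every x ∈ A there exist T ∈ τ and P ∉ 𝒫 such that x ∈ T ∩ P ⊆ A. -/
theorem primal_topology_base {X : Type*} [TopologicalSpace X] (P : Set (Set X))
    (hP : PrimalOn X P) :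
    (∀ T Q : Set X, IsOpen T → Q ∉ P → clDiam P (T ∩ Q)ᶜ = (T ∩ Q)ᶜ) ∧
    (∀ A : Set X, clDiam P Aᶜ = Aᶜ → ∀ x ∈ A,
      ∃ T Q : Set X, IsOpen T ∧ Q ∉ P ∧ x ∈ T ∩ Q ∧ T ∩ Q ⊆ A) := by
  obtain ⟨-, hdown, -⟩ := hP
  constructor
  · intro T Q hT hQ
    apply Set.union_eq_self_of_subset_right
    intro x hx
    by_contra hxc
    rw [Set.notMem_compl_iff] at hxc
    have h := hx T hT hxc.1
    rw [compl_compl] at h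
    exact hQ (hdown _ _ h (fun q hq => by
      by_cases hqT : q ∈ T
      · exact Or.inl ⟨hqT, hq⟩
      · exact Or.inr hqT))
  · intro A hA x hx
    have hnot : x ∉ pdiam P Aᶜ := fun h => by
      have : x ∈ clDiam P Aᶜ := Or.inr h
      rw [hA] at this
      exact this hx
    simp only [pdiam, Set.mem_setOf_eq, not_forall] at hnot
    obtain ⟨U, hU, hxU, hUP⟩ := hnot
    rw [compl_compl] at hUP
    refine ⟨U, A ∪ Uᶜ, hU, hUP, ⟨hxU, Or.inl hx⟩, ?_⟩
    rintro y ⟨hyU, hyA | hyUc⟩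
    · exact hyA
    · exact absurd hyU hyUc
end
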